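/- arXiv:0802.3669 — 4 statements merged into one kernel-verified Lean document; each statement's English description precedes it below -/
import Mathlib

section
/- Let T be a 4×4 matrix with complex entries. Then the following are equivalent: (a) all 3×3 minors of T vanish and all 2×2 minors of the 3×3 submatrix of T obtained by deleting the first row and the first column vanish; (b) either all 2×2 minors of the 3×4 submatrix obtained from T by deleting the first row vanish, or all 2×2 minors of the 4×3 submatrix obtained from T by deleting the first column vanish. Equivalently, in rank terms: rank T ≤ 2 and the lower-right 3×3 submatrix of T has rank ≤ 1 if and only if the matrix formed by the last three rows of T has rank ≤ 1 or the matrix formed by the last three columns of T has rank ≤ 1. -/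
/-!
Write `T` in block form with first row `r`, first column `c` and lower-right block `D`. If
`D = u vᵀ`, the `3 × 3` minor of `T` on rows `0, i, i'` and columns `0, j, j'` factors as
`(cᵢ uᵢ' - cᵢ' uᵢ) (r_j' v_j - r_j v_j')`. So when `rank T ≤ 2`, either `c` is parallel to `u`,
and then the last rows `[c | u vᵀ]` have rank at most one, or `r` is parallel to `v`, and then
so have the last columns. Conversely, if the last rows have rank at most one, so does `D`, and
the first row adds at most one to the rank; the case of the last columns follows by transposing.
-/

open Matrix

namespace Matrix

variable {m n k K R : Type*}

theorem card_le_rank_of_det_submatrix_ne_zero [CommRing R] [IsDomain R] [Fintype n]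
    [Fintype k] [DecidableEq k] (M : Matrix m n R) (f : k → m) (g : k → n)
    (h : (M.submatrix f g).det ≠ 0) : Fintype.card k ≤ M.rank :=
  (rank_of_det_ne_zero h).symm.trans_le (rank_submatrix_le M f g)

theorem mul_eq_mul_of_rank_le_one [CommRing R] [IsDomain R] [Fintype n] {M : Matrix m n R}
    (h : M.rank ≤ 1) (i i' : m) (j j' : n) : M i j * M i' j' = M i j' * M i' j := by
  by_contra hne
  have := card_le_rank_of_det_submatrix_ne_zero M ![i, i'] ![j, j'] <| by
    rw [det_fin_two]
    simpa [sub_eq_zero] using hne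
  rw [Fintype.card_fin] at this
  omega

theorem exists_eq_vecMulVec_of_mul_eq_mul [Field K] {M : Matrix m n K}
    (h : ∀ i i' j j', M i j * M i' j' = M i j' * M i' j) : ∃ u v, M = vecMulVec u v := by
  by_cases hM : M = 0
  · exact ⟨0, 0, by simp [hM]⟩
  obtain ⟨i₀, j₀, h₀⟩ : ∃ i j, M i j ≠ 0 := by
    by_contra! hc
    exact hM (ext hc)
  refine ⟨fun i => M i j₀, fun j => M i₀ j / M i₀ j₀, ext fun i j => ?_⟩
  rw [vecMulVec_apply, mul_div_assoc', eq_div_iff h₀]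
  exact h i i₀ j j₀

theorem rank_le_one_iff_mul_eq_mul [Field K] [Fintype n] {M : Matrix m n K} :
    M.rank ≤ 1 ↔ ∀ i i' j j', M i j * M i' j' = M i j' * M i' j := by
  refine ⟨mul_eq_mul_of_rank_le_one, fun h => ?_⟩
  obtain ⟨u, v, rfl⟩ := exists_eq_vecMulVec_of_mul_eq_mul h
  exact rank_vecMulVec_le u v

theorem rank_le_rank_submatrix_succ_add_one [Field K] [Fintype n] {a : ℕ}
    (T : Matrix (Fin (a + 1)) n K) : T.rank ≤ (T.submatrix Fin.succ id).rank + 1 := by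
  have hrows : Set.range T.row = insert (T 0) (Set.range (T.submatrix Fin.succ id).row) := by
    rw [← Fin.cons_self_tail T.row, Fin.range_cons]
    rfl
  have hline : Module.finrank K (K ∙ T 0) ≤ 1 := by
    simpa using finrank_span_le_card ({T 0} : Set (n → K))
  rw [rank_eq_finrank_span_row, rank_eq_finrank_span_row, hrows, Submodule.span_insert]
  linarith [Submodule.finrank_add_le_finrank_add_finrank (K ∙ T 0)
    (Submodule.span K (Set.range (T.submatrix Fin.succ id).row))]

theorem rank_le_one_of_col_zero_mul_eq_mul [Field K] {b : ℕ} {L : Matrix m (Fin (b + 1)) K}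
    {u : m → K} {v : Fin b → K} (huv : ∀ i j, L i j.succ = u i * v j)
    (hc : ∀ i i', L i 0 * u i' = L i' 0 * u i) : L.rank ≤ 1 := by
  refine rank_le_one_iff_mul_eq_mul.mpr fun i i' j j' => ?_
  cases j using Fin.cases <;> cases j' using Fin.cases <;> simp only [huv]
  · linear_combination v _ * hc i i'
  · linear_combination -(v _ * hc i i')
  · ring

theorem det_submatrix_zero_succ_succ [CommRing R] {a b : ℕ}
    {T : Matrix (Fin (a + 1)) (Fin (b + 1)) R}
    {u : Fin a → R} {v : Fin b → R} (huv : ∀ i j, T i.succ j.succ = u i * v j)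
    (i i' : Fin a) (j j' : Fin b) :
    (T.submatrix ![0, i.succ, i'.succ] ![0, j.succ, j'.succ]).det =
      (T i.succ 0 * u i' - T i'.succ 0 * u i) * (T 0 j'.succ * v j - T 0 j.succ * v j') := by
  simp only [det_fin_three, submatrix_apply, cons_val_zero, cons_val_one, cons_val_two,
    head_cons, tail_cons, huv]
  ring

theorem rank_submatrix_succ_le_one_or_of_rank_le_two [Field K] {a b : ℕ}
    {T : Matrix (Fin (a + 1)) (Fin (b + 1)) K} (hT : T.rank ≤ 2)
    (hD : (T.submatrix Fin.succ Fin.succ).rank ≤ 1) :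
    (T.submatrix Fin.succ id).rank ≤ 1 ∨ (T.submatrix id Fin.succ).rank ≤ 1 := by
  obtain ⟨u, v, huv⟩ := exists_eq_vecMulVec_of_mul_eq_mul (mul_eq_mul_of_rank_le_one hD)
  have huv' (i j) : T i.succ j.succ = u i * v j := congr_fun₂ huv i j
  by_contra! ⟨hrows, hcols⟩
  obtain ⟨i, i', hi⟩ : ∃ i i', T i.succ 0 * u i' ≠ T i'.succ 0 * u i := by
    by_contra! hc
    exact hrows.not_ge (rank_le_one_of_col_zero_mul_eq_mul huv' hc)
  obtain ⟨j, j', hj⟩ : ∃ j j', T 0 j'.succ * v j ≠ T 0 j.succ * v j' := by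
    by_contra! hr
    refine hcols.not_ge ?_
    rw [← rank_transpose]
    exact rank_le_one_of_col_zero_mul_eq_mul (u := v) (v := u)
      (fun j i => (huv' i j).trans (mul_comm _ _)) fun j j' => hr j' j
  have := card_le_rank_of_det_submatrix_ne_zero T _ _ <| by
    rw [det_submatrix_zero_succ_succ huv' i i' j j']
    exact mul_ne_zero (sub_ne_zero.mpr hi) (sub_ne_zero.mpr hj)
  rw [Fintype.card_fin] at this
  omega

theorem rank_le_two_and_rank_submatrix_succ_succ_le_one [Field K] {a b : ℕ}
    {T : Matrix (Fin (a + 1)) (Fin (b + 1)) K} (h : (T.submatrix Fin.succ id).rank ≤ 1) :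
    T.rank ≤ 2 ∧ (T.submatrix Fin.succ Fin.succ).rank ≤ 1 := by
  refine ⟨(rank_le_rank_submatrix_succ_add_one T).trans (by omega), ?_⟩
  simpa only [submatrix_submatrix, Function.comp_id, Function.id_comp] using
    (rank_submatrix_le _ id Fin.succ).trans h

end Matrix

/-- For a 4×4 complex matrix `T`: `rank T ≤ 2` and the lower-right 3×3 submatrix
(obtained by deleting the first row and the first column) has rank ≤ 1, if and only if
the 3×4 matrix formed by the last three rows of `T` has rank ≤ 1 or the 4×3 matrix
formed by the last three columns of `T` has rank ≤ 1. -/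
theorem stmt_1 (T : Matrix (Fin 4) (Fin 4) ℂ) :
    (T.rank ≤ 2 ∧ (T.submatrix (Fin.succ : Fin 3 → Fin 4) (Fin.succ : Fin 3 → Fin 4)).rank ≤ 1)
      ↔
    ((T.submatrix (Fin.succ : Fin 3 → Fin 4) (id : Fin 4 → Fin 4)).rank ≤ 1 ∨
      (T.submatrix (id : Fin 4 → Fin 4) (Fin.succ : Fin 3 → Fin 4)).rank ≤ 1) := by
  refine ⟨fun ⟨hT, hD⟩ => rank_submatrix_succ_le_one_or_of_rank_le_two hT hD, ?_⟩
  rintro (hrows | hcols)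
  · exact rank_le_two_and_rank_submatrix_succ_succ_le_one hrows
  · have := rank_le_two_and_rank_submatrix_succ_succ_le_one (T := Tᵀ) <| by
      rwa [← transpose_submatrix, rank_transpose]
    rwa [rank_transpose, ← transpose_submatrix, rank_transpose] at this
end

section
/- For all x, r, d ∈ ℂ, the 4×6 complex matrix with rows (x, 0, 0, xr, 1, dxr), (0, x²r², xr, dx²r², dxr, d²x²r² + xr²), (0, xr, 1, dxr, d, d²xr + r), (xr, dx²r², dxr, d²x²r² + xr², d²xr + r, d³x²r² + 2dxr²) is double-symmetric and has rank at most 2, i.e. all of its 3×3 minors vanish. -/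
/-- The 4×6 double-symmetric matrix built from symmetric 2×2 blocks `A B C D` in the
block form `[[A, B, C], [B, C, D]]`. -/
def doubleSymBlock (A B C D : Matrix (Fin 2) (Fin 2) ℂ) : Matrix (Fin 4) (Fin 6) ℂ :=
  !![A 0 0, A 0 1, B 0 0, B 0 1, C 0 0, C 0 1;
     A 1 0, A 1 1, B 1 0, B 1 1, C 1 0, C 1 1;
     B 0 0, B 0 1, C 0 0, C 0 1, D 0 0, D 0 1;
     B 1 0, B 1 1, C 1 0, C 1 1, D 1 0, D 1 1]

/-- A 4×6 complex matrix is double-symmetric if it has the block form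
`[[A, B, C], [B, C, D]]` with `A`, `B`, `C`, `D` symmetric 2×2 matrices. -/
def IsDoubleSymmetric (Q : Matrix (Fin 4) (Fin 6) ℂ) : Prop :=
  ∃ A B C D : Matrix (Fin 2) (Fin 2) ℂ,
    A.IsSymm ∧ B.IsSymm ∧ C.IsSymm ∧ D.IsSymm ∧ Q = doubleSymBlock A B C D

/-- The explicit 4×6 matrix parametrized by `x, r, d` is double-symmetric and has
rank at most 2, i.e. all of its 3×3 minors vanish. -/
theorem stmt_3 (x r d : ℂ) :
    IsDoubleSymmetric
      !![x, 0, 0, x*r, 1, d*x*r;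
         0, x^2*r^2, x*r, d*x^2*r^2, d*x*r, d^2*x^2*r^2 + x*r^2;
         0, x*r, 1, d*x*r, d, d^2*x*r + r;
         x*r, d*x^2*r^2, d*x*r, d^2*x^2*r^2 + x*r^2, d^2*x*r + r, d^3*x^2*r^2 + 2*d*x*r^2] ∧
    (!![x, 0, 0, x*r, 1, d*x*r;
        0, x^2*r^2, x*r, d*x^2*r^2, d*x*r, d^2*x^2*r^2 + x*r^2;
        0, x*r, 1, d*x*r, d, d^2*x*r + r;
        x*r, d*x^2*r^2, d*x*r, d^2*x^2*r^2 + x*r^2, d^2*x*r + r,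
          d^3*x^2*r^2 + 2*d*x*r^2] : Matrix (Fin 4) (Fin 6) ℂ).rank ≤ 2 ∧
    ∀ (ri : Fin 3 → Fin 4) (ci : Fin 3 → Fin 6),
      ((!![x, 0, 0, x*r, 1, d*x*r;
           0, x^2*r^2, x*r, d*x^2*r^2, d*x*r, d^2*x^2*r^2 + x*r^2;
           0, x*r, 1, d*x*r, d, d^2*x*r + r;
           x*r, d*x^2*r^2, d*x*r, d^2*x^2*r^2 + x*r^2, d^2*x*r + r,
             d^3*x^2*r^2 + 2*d*x*r^2] : Matrix (Fin 4) (Fin 6) ℂ).submatrix ri ci).det = 0 := by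
  set M : Matrix (Fin 4) (Fin 6) ℂ :=
    !![x, 0, 0, x*r, 1, d*x*r;
       0, x^2*r^2, x*r, d*x^2*r^2, d*x*r, d^2*x^2*r^2 + x*r^2;
       0, x*r, 1, d*x*r, d, d^2*x*r + r;
       x*r, d*x^2*r^2, d*x*r, d^2*x^2*r^2 + x*r^2, d^2*x*r + r,
         d^3*x^2*r^2 + 2*d*x*r^2] with hM
  set N : Matrix (Fin 4) (Fin 2) ℂ := !![1, 0; 0, x*r; 0, 1; r, d*x*r] with hN
  set P : Matrix (Fin 2) (Fin 6) ℂ :=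
    !![x, 0, 0, x*r, 1, d*x*r;
       0, x*r, 1, d*x*r, d, d^2*x*r + r] with hP
  have hfac : M = N * P := by
    rw [hM, hN, hP]
    ext i j
    fin_cases i <;> fin_cases j <;>
      simp [Matrix.mul_apply, Fin.sum_univ_succ, Matrix.cons_val_succ,
        show ((5:Fin 6)) = Fin.succ 4 from rfl] <;> ring
  refine ⟨?_, ?_, ?_⟩
  · refine ⟨!![x, 0; 0, x^2*r^2], !![0, x*r; x*r, d*x^2*r^2],
      !![1, d*x*r; d*x*r, d^2*x^2*r^2 + x*r^2],
      !![d, d^2*x*r + r; d^2*x*r + r, d^3*x^2*r^2 + 2*d*x*r^2],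
      by ext i j; fin_cases i <;> fin_cases j <;> rfl,
      by ext i j; fin_cases i <;> fin_cases j <;> rfl,
      by ext i j; fin_cases i <;> fin_cases j <;> rfl,
      by ext i j; fin_cases i <;> fin_cases j <;> rfl, ?_⟩
    rw [hM]
    ext i j
    fin_cases i <;> fin_cases j <;> rfl
  · rw [hfac]
    exact le_trans (Matrix.rank_mul_le_right N P) (by simpa using P.rank_le_card_height)
  · intro ri ci
    rw [hfac, Matrix.submatrix_mul N P ri id ci Function.bijective_id]
    by_contra h
    have hu : IsUnit (N.submatrix ri id * P.submatrix id ci) :=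
      (Matrix.isUnit_iff_isUnit_det _).2 (isUnit_iff_ne_zero.2 h)
    have h3 := Matrix.rank_of_isUnit _ hu
    have h2 := le_trans (Matrix.rank_mul_le_left (N.submatrix ri id) (P.submatrix id ci))
      ((N.submatrix ri id).rank_le_card_width)
    simp [h3] at h2
end

section
/- Let A, B, C, D be symmetric 2×2 complex matrices and let Q be the double-symmetric 4×6 matrix [[A,B,C],[B,C,D]]. Then Q has rank at most 1 if and only if there exist a symmetric 2×2 complex matrix S of rank at most 1 and scalars a, b, c, d ∈ ℂ satisfying ac = b², bd = c², ad = bc, such that A = aS, B = bS, C = cS and D = dS. -/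
/-!
Rank at most one means `Q = v wᵀ`; splitting `v = (p, q)` and `w = (r, s, t)` along the blocks
gives `A = p rᵀ`, `B = p sᵀ = q rᵀ`, `C = p tᵀ = q sᵀ`, `D = q tᵀ`. If `p = 0` take `S = D`.
Otherwise symmetry of `A`, `B`, `C` forces `r = a p`, `s = b p`, `t = c p`, and the two
expressions for `B` and `C` give `a q = b p` and `b q = c p`; so `q` is a multiple of `p`
(or `a = b = c = 0`), `a, b, c, d` is a geometric progression, and `S = p pᵀ` works.
Conversely, for `S = x yᵀ` and `a ≠ 0`, `Q = (x, (b/a) x) (a y, b y, c y)ᵀ`.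
-/

open Matrix

namespace Matrix

variable {K m n : Type*} [Field K]

theorem submatrix_vecMulVec {α m' n' : Type*} [Mul α] (v : m → α) (w : n → α) (f : m' → m)
    (g : n' → n) : (vecMulVec v w).submatrix f g = vecMulVec (v ∘ f) (w ∘ g) :=
  rfl

theorem exists_eq_vecMulVec_of_rank_le_one [Fintype m] [Fintype n] {M : Matrix m n K}
    (h : M.rank ≤ 1) : ∃ v w, M = vecMulVec v w := by
  rw [rank_eq_finrank_span_cols, Submodule.finrank_le_one_iff_isPrincipal] at h
  obtain ⟨v, hv⟩ := h
  have hcol : ∀ j, ∃ c : K, c • v = Mᵀ j := fun j => by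
    rw [← Submodule.mem_span_singleton, ← hv]
    exact Submodule.subset_span (Set.mem_range_self j)
  choose c hc using hcol
  refine ⟨v, c, ext fun i j => ?_⟩
  rw [vecMulVec_apply, mul_comm, ← smul_eq_mul, ← Pi.smul_apply, hc, transpose_apply]

theorem rank_le_one_iff_exists_vecMulVec [Fintype m] [Fintype n] {M : Matrix m n K} :
    M.rank ≤ 1 ↔ ∃ v w, M = vecMulVec v w :=
  ⟨exists_eq_vecMulVec_of_rank_le_one, fun ⟨v, w, h⟩ => h ▸ rank_vecMulVec_le v w⟩

theorem exists_eq_smul_of_isSymm_vecMulVec {p r : n → K} (hp : p ≠ 0)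
    (h : (vecMulVec p r).IsSymm) : ∃ a : K, r = a • p := by
  obtain ⟨i, hi⟩ := Function.ne_iff.mp hp
  refine ⟨r i / p i, funext fun j => ?_⟩
  have hij : p j * r i = p i * r j := by simpa [vecMulVec_apply] using congr_fun₂ h i j
  rw [Pi.smul_apply, smul_eq_mul, div_mul_eq_mul_div, eq_div_iff hi]
  linear_combination -hij

theorem vecMulVec_left_injective {α : Type*} [MulZeroClass α] [IsRightCancelMulZero α]
    {p : n → α} (hp : p ≠ 0) : Function.Injective fun x : m → α => vecMulVec x p := by
  intro x y h
  obtain ⟨j, hj⟩ := Function.ne_iff.mp hp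
  exact funext fun i => mul_right_cancel₀ hj (congr_fun₂ h i j)

end Matrix

theorem exists_smul_eq_of_smul_eq_smul {K V : Type*} [Field K] [AddCommGroup V] [Module K V]
    {p q : V} {a b c : K} (hp : p ≠ 0) (hab : a • q = b • p) (hbc : b • q = c • p) :
    ∃ d : K, c • q = d • p ∧ a * c = b ^ 2 ∧ b * d = c ^ 2 ∧ a * d = b * c := by
  by_cases ha : a = 0
  · have hb : b = 0 := by simpa [ha, hp] using hab.symm
    have hc : c = 0 := by simpa [hb, hp] using hbc.symm
    exact ⟨0, by simp [hc], by simp [ha, hb], by simp [hb, hc], by simp [ha, hb]⟩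
  have hq : q = (b / a) • p := by rw [div_eq_inv_mul, mul_smul, ← hab, inv_smul_smul₀ ha]
  have hac : a * c = b ^ 2 := by
    have : c • p = (b ^ 2 / a) • p := by rw [← hbc, hq, smul_smul]; ring_nf
    rw [smul_left_injective K hp this]; field_simp
  refine ⟨b * c / a, by rw [hq, smul_smul]; ring_nf, hac, ?_, by field_simp⟩
  field_simp
  linear_combination -c * hac

theorem rank_doubleSymBlock_le_one_iff {A B C D : Matrix (Fin 2) (Fin 2) ℂ} :
    (doubleSymBlock A B C D).rank ≤ 1 ↔ ∃ p q r s t : Fin 2 → ℂ,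
      A = vecMulVec p r ∧ B = vecMulVec p s ∧ B = vecMulVec q r ∧
      C = vecMulVec p t ∧ C = vecMulVec q s ∧ D = vecMulVec q t := by
  rw [rank_le_one_iff_exists_vecMulVec]
  constructor
  · rintro ⟨v, w, h⟩
    refine ⟨v ∘ ![0, 1], v ∘ ![2, 3], w ∘ ![0, 1], w ∘ ![2, 3], w ∘ ![4, 5], ?_⟩
    have hblock : ∀ {m' n' : Type} (f : m' → Fin 4) (g : n' → Fin 6),
        vecMulVec (v ∘ f) (w ∘ g) = (doubleSymBlock A B C D).submatrix f g := fun f g => by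
      rw [h, submatrix_vecMulVec]
    refine ⟨?_, ?_, ?_, ?_, ?_, ?_⟩ <;> rw [hblock] <;> ext i j <;> fin_cases i <;> fin_cases j <;>
      rfl
  · rintro ⟨p, q, r, s, t, rfl, rfl, hB, rfl, hC, rfl⟩
    refine ⟨![p 0, p 1, q 0, q 1], ![r 0, r 1, s 0, s 1, t 0, t 1], ?_⟩
    ext i j
    fin_cases i <;> fin_cases j <;>
      first | rfl | exact congr_fun₂ hB _ _ | exact congr_fun₂ hC _ _

theorem exists_smul_of_rank_doubleSymBlock_le_one {A B C D : Matrix (Fin 2) (Fin 2) ℂ}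
    (hA : A.IsSymm) (hB : B.IsSymm) (hC : C.IsSymm) (hD : D.IsSymm)
    (h : (doubleSymBlock A B C D).rank ≤ 1) :
    ∃ (S : Matrix (Fin 2) (Fin 2) ℂ) (a b c d : ℂ), S.IsSymm ∧ S.rank ≤ 1 ∧
      a * c = b ^ 2 ∧ b * d = c ^ 2 ∧ a * d = b * c ∧
      A = a • S ∧ B = b • S ∧ C = c • S ∧ D = d • S := by
  obtain ⟨p, q, r, s, t, rfl, rfl, hqr, rfl, hqs, rfl⟩ := rank_doubleSymBlock_le_one_iff.mp h
  by_cases hp : p = 0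
  · subst hp
    exact ⟨vecMulVec q t, 0, 0, 0, 1, hD, rank_vecMulVec_le q t, by simp, by simp, by simp,
      by simp, by simp, by simp, by simp⟩
  obtain ⟨a, rfl⟩ := exists_eq_smul_of_isSymm_vecMulVec hp hA
  obtain ⟨b, rfl⟩ := exists_eq_smul_of_isSymm_vecMulVec hp hB
  obtain ⟨c, rfl⟩ := exists_eq_smul_of_isSymm_vecMulVec hp hC
  have hab : a • q = b • p := vecMulVec_left_injective hp <| by
    simpa only [smul_vecMulVec, vecMulVec_smul] using hqr.symm
  have hbc : b • q = c • p := vecMulVec_left_injective hp <| by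
    simpa only [smul_vecMulVec, vecMulVec_smul] using hqs.symm
  obtain ⟨d, hcd, hac, hbd, had⟩ := exists_smul_eq_of_smul_eq_smul hp hab hbc
  refine ⟨vecMulVec p p, a, b, c, d, transpose_vecMulVec p p, rank_vecMulVec_le p p,
    hac, hbd, had, vecMulVec_smul .., vecMulVec_smul .., vecMulVec_smul .., ?_⟩
  rw [vecMulVec_smul, ← smul_vecMulVec, hcd, smul_vecMulVec]

theorem rank_doubleSymBlock_smul_le_one {S : Matrix (Fin 2) (Fin 2) ℂ} (hS : S.rank ≤ 1)
    {a b c d : ℂ} (hac : a * c = b ^ 2) (hbd : b * d = c ^ 2) (had : a * d = b * c) :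
    (doubleSymBlock (a • S) (b • S) (c • S) (d • S)).rank ≤ 1 := by
  obtain ⟨x, y, rfl⟩ := exists_eq_vecMulVec_of_rank_le_one hS
  rw [rank_doubleSymBlock_le_one_iff]
  by_cases ha : a = 0
  · have hb : b = 0 := pow_eq_zero_iff two_ne_zero |>.mp (by rw [← hac, ha, zero_mul])
    have hc : c = 0 := pow_eq_zero_iff two_ne_zero |>.mp (by rw [← hbd, hb, zero_mul])
    refine ⟨0, x, 0, 0, d • y, ?_⟩
    simp [ha, hb, hc, vecMulVec_smul]
  refine ⟨x, (b / a) • x, a • y, b • y, c • y, ?_⟩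
  simp only [smul_vecMulVec, vecMulVec_smul, smul_smul, true_and]
  refine ⟨by rw [mul_div_cancel₀ _ ha], ?_, ?_⟩ <;> congr 1 <;> field_simp
  · linear_combination hac
  · linear_combination had

/-- A double-symmetric 4×6 matrix `[[A,B,C],[B,C,D]]` has rank at most 1 if and only
if there are a symmetric 2×2 matrix `S` of rank at most 1 and scalars `a, b, c, d`
with `ac = b²`, `bd = c²`, `ad = bc` such that `A = aS`, `B = bS`, `C = cS`, `D = dS`. -/
theorem stmt_4 (A B C D : Matrix (Fin 2) (Fin 2) ℂ)
    (hA : A.IsSymm) (hB : B.IsSymm) (hC : C.IsSymm) (hD : D.IsSymm) :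
    (doubleSymBlock A B C D).rank ≤ 1 ↔
      ∃ (S : Matrix (Fin 2) (Fin 2) ℂ) (a b c d : ℂ),
        S.IsSymm ∧ S.rank ≤ 1 ∧
        a * c = b ^ 2 ∧ b * d = c ^ 2 ∧ a * d = b * c ∧
        A = a • S ∧ B = b • S ∧ C = c • S ∧ D = d • S := by
  refine ⟨exists_smul_of_rank_doubleSymBlock_le_one hA hB hC hD, ?_⟩
  rintro ⟨S, a, b, c, d, -, hS, hac, hbd, had, rfl, rfl, rfl, rfl⟩
  exact rank_doubleSymBlock_smul_le_one hS hac hbd had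
end

section
/- Let A, B, C, D be symmetric 2×2 complex matrices with A invertible, and let Q be the double-symmetric 4×6 matrix [[A,B,C],[B,C,D]]. Then Q has rank at most 2 if and only if C = B A⁻¹ B and D = B A⁻¹ B A⁻¹ B. -/
namespace Matrix

variable {K : Type*} [Field K] {l m n : Type*} [Fintype m] [DecidableEq m] [Fintype n]

theorem card_add_one_le_rank_fromBlocks {A : Matrix m m K} (hA : IsUnit A.det)
    (B : Matrix m n K) (C : Matrix l m K) {D : Matrix l n K} {i : l} {j : n}
    (hij : D i j ≠ (C * A⁻¹ * B) i j) :
    Fintype.card m + 1 ≤ (fromBlocks A B C D).rank := by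
  let M := (fromBlocks A B C D).submatrix (Sum.map id fun _ : Unit => i)
    (Sum.map id fun _ : Unit => j)
  have hM : M = fromBlocks A (B.submatrix id fun _ => j) (C.submatrix (fun _ => i) id)
      (of fun _ _ => D i j) := by
    ext (_ | _) (_ | _) <;> rfl
  have hMdet : IsUnit M.det := by
    let := invertibleOfIsUnitDet A hA
    rw [hM, det_fromBlocks₁₁, invOf_eq_nonsing_inv, det_unique (n := Unit)]
    refine hA.mul (isUnit_iff_ne_zero.2 (sub_ne_zero.2 ?_))
    simpa [mul_apply] using hij
  calc Fintype.card m + 1 = M.rank := by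
        rw [rank_of_isUnit M ((isUnit_iff_isUnit_det M).2 hMdet)]; simp
    _ ≤ (fromBlocks A B C D).rank := rank_submatrix_le _ _ _

theorem rank_fromBlocks_le_card_iff {A : Matrix m m K} (hA : IsUnit A.det)
    (B : Matrix m n K) (C : Matrix l m K) (D : Matrix l n K) :
    (fromBlocks A B C D).rank ≤ Fintype.card m ↔ D = C * A⁻¹ * B := by
  constructor
  · intro hrank
    ext i j
    by_contra hij
    have := card_add_one_le_rank_fromBlocks hA B C hij
    omega
  · rintro rfl
    have hfac : fromBlocks A B C (C * A⁻¹ * B) = fromRows A C * fromCols 1 (A⁻¹ * B) := by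
      rw [fromRows_mul_fromCols, Matrix.mul_one, Matrix.mul_one,
        mul_nonsing_inv_cancel_left _ _ hA, Matrix.mul_assoc]
    rw [hfac]
    exact (rank_mul_le_left _ _).trans (rank_le_card_width _)

end Matrix

open Matrix

theorem doubleSymBlock_eq_submatrix_fromBlocks (A B C D : Matrix (Fin 2) (Fin 2) ℂ) :
    doubleSymBlock A B C D =
      (fromBlocks A (fromCols B C) B (fromCols C D)).submatrix finSumFinEquiv.symm
        (finSumFinEquiv.symm.trans (Equiv.sumCongr (Equiv.refl _) finSumFinEquiv.symm)) := by
  ext i j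
  fin_cases i <;> fin_cases j <;> rfl

theorem stmt_6_general (A B C D : Matrix (Fin 2) (Fin 2) ℂ)
    (hAinv : IsUnit A.det) :
    (doubleSymBlock A B C D).rank ≤ 2 ↔
      C = B * A⁻¹ * B ∧ D = B * A⁻¹ * B * A⁻¹ * B := by
  have hSchur := rank_fromBlocks_le_card_iff hAinv (fromCols B C) B (fromCols C D)
  rw [Fintype.card_fin, Matrix.mul_fromCols, fromCols_ext_iff] at hSchur
  rw [doubleSymBlock_eq_submatrix_fromBlocks, rank_submatrix, hSchur]
  refine and_congr_right fun hC => ?_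
  rw [hC]
  simp only [Matrix.mul_assoc]

/-- If `A, B, C, D` are symmetric 2×2 complex matrices with `A` invertible, then the
double-symmetric 4×6 matrix `[[A,B,C],[B,C,D]]` has rank at most 2 if and only if
`C = B A⁻¹ B` and `D = B A⁻¹ B A⁻¹ B`. -/
theorem stmt_6 (A B C D : Matrix (Fin 2) (Fin 2) ℂ)
    (hA : A.IsSymm) (hB : B.IsSymm) (hC : C.IsSymm) (hD : D.IsSymm)
    (hAinv : IsUnit A.det) :
    (doubleSymBlock A B C D).rank ≤ 2 ↔
      C = B * A⁻¹ * B ∧ D = B * A⁻¹ * B * A⁻¹ * B :=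
  stmt_6_general A B C D hAinv
end
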